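/- Let S be a distributive subalgebra of RCC5 and let Γ = {v_i R_ij v_j : 1 ≤ i,j ≤ n} be an all-different, path-consistent RCC5 network over S. Then for i ≠ j, the constraint (v_i R_ij v_j) is redundant in Γ if and only if R_ij = ⋂{ R_ik ⋄ R_kj : k ≠ i, k ≠ j } (where the empty intersection is ⋆), i.e., R_ij is the intersection of the weak compositions of all paths of length 2 from v_i to v_j in Γ. -/
import Mathlib


/-- A *region* is a nonempty regular closed subset of the Euclidean plane `ℝ × ℝ`. -/
def Region : Type :=
  {x : Set (ℝ × ℝ) // x.Nonempty ∧ x = closure (interior x)}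

namespace Region

/-- Part-of: `x P y` iff `x ⊆ y`. -/
def P (x y : Region) : Prop := x.1 ⊆ y.1

/-- Overlap: `x O y` iff some region is a common part of `x` and `y`. -/
def O (x y : Region) : Prop := ∃ z : Region, z.1 ⊆ x.1 ∧ z.1 ⊆ y.1

/-- Connection: `x C y` iff `x ∩ y ≠ ∅`. -/
def C (x y : Region) : Prop := (x.1 ∩ y.1).Nonempty

end Region

/-- The five basic RCC5 relations. -/
inductive RCC5Basic : Type
  | DR | PO | PP | PPi | EQ
deriving DecidableEq

namespace RCC5Basic

/-- Interpretation of the basic RCC5 relations on regions. -/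
def interp : RCC5Basic → Region → Region → Prop
  | DR, x, y => ¬ Region.O x y
  | PO, x, y => Region.O x y ∧ ¬ x.1 ⊆ y.1 ∧ ¬ y.1 ⊆ x.1
  | PP, x, y => x.1 ⊆ y.1 ∧ x ≠ y
  | PPi, x, y => y.1 ⊆ x.1 ∧ x ≠ y
  | EQ, x, y => x = y

/-- Converse of a basic RCC5 relation. -/
def conv : RCC5Basic → RCC5Basic
  | DR => DR | PO => PO | PP => PPi | PPi => PP | EQ => EQ

end RCC5Basic

/-- An RCC5 relation is a union of basic relations, identified with a subset of `B₅`. -/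
abbrev RCC5Rel : Type := Set RCC5Basic

namespace RCC5Rel

/-- A pair of regions is an instance of an RCC5 relation iff it is an instance of one of
its basic relations. -/
def interp (R : RCC5Rel) (x y : Region) : Prop := ∃ b ∈ R, RCC5Basic.interp b x y

/-- Converse of an RCC5 relation. -/
def conv (R : RCC5Rel) : RCC5Rel := {b | RCC5Basic.conv b ∈ R}

/-- Weak composition: `γ ∈ R ⋄ S` iff `γ` intersects the relational composition `R ∘ S`. -/
def comp (R S : RCC5Rel) : RCC5Rel :=
  {γ | ∃ x z : Region, RCC5Basic.interp γ x z ∧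
        ∃ y : Region, RCC5Rel.interp R x y ∧ RCC5Rel.interp S y z}

lemma conv_univ : RCC5Rel.conv Set.univ = Set.univ := by
  ext b; simp [RCC5Rel.conv]

end RCC5Rel

/-- A distributive subalgebra of RCC5: contains all basic relations, is closed under
converse, weak composition and (nonempty) intersection, and weak composition distributes
over nonempty intersections. -/
def IsDistributiveSubalgebra (𝒮 : Set RCC5Rel) : Prop :=
  (∀ b : RCC5Basic, ({b} : RCC5Rel) ∈ 𝒮) ∧
  (∀ R ∈ 𝒮, RCC5Rel.conv R ∈ 𝒮) ∧
  (∀ R ∈ 𝒮, ∀ S ∈ 𝒮, RCC5Rel.comp R S ∈ 𝒮) ∧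
  (∀ R ∈ 𝒮, ∀ S ∈ 𝒮, (R ∩ S).Nonempty → R ∩ S ∈ 𝒮) ∧
  (∀ R ∈ 𝒮, ∀ T₁ ∈ 𝒮, ∀ T₂ ∈ 𝒮, (T₁ ∩ T₂).Nonempty →
    RCC5Rel.comp R (T₁ ∩ T₂) = RCC5Rel.comp R T₁ ∩ RCC5Rel.comp R T₂ ∧
    RCC5Rel.comp (T₁ ∩ T₂) R = RCC5Rel.comp T₁ R ∩ RCC5Rel.comp T₂ R)

/-- An RCC5 (constraint) network on `n` variables. -/
structure RCC5Network (n : ℕ) where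
  rel : Fin n → Fin n → RCC5Rel
  conv_rel : ∀ i j, rel j i = RCC5Rel.conv (rel i j)
  diag : ∀ i, rel i i = {RCC5Basic.EQ}

namespace RCC5Network

variable {n : ℕ}

/-- A solution of a network assigns regions to the variables satisfying all constraints. -/
def IsSolution (Γ : RCC5Network n) (a : Fin n → Region) : Prop :=
  ∀ i j, RCC5Rel.interp (Γ.rel i j) (a i) (a j)

/-- A network is consistent if it has a solution. -/
def Consistent (Γ : RCC5Network n) : Prop := ∃ a, Γ.IsSolution a

/-- `Γ` entails the constraint `(v_i S v_j)`. -/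
def Entails (Γ : RCC5Network n) (i j : Fin n) (S : RCC5Rel) : Prop :=
  ∀ a, Γ.IsSolution a → RCC5Rel.interp S (a i) (a j)

/-- All-different: consistent and no two distinct variables are forced to be equal. -/
def AllDifferent (Γ : RCC5Network n) : Prop :=
  Γ.Consistent ∧ ∀ i j, i ≠ j → ¬ Γ.Entails i j {RCC5Basic.EQ}

/-- Path-consistency. -/
def PathConsistent (Γ : RCC5Network n) : Prop :=
  ∀ i j k, (Γ.rel i j).Nonempty ∧ Γ.rel i j ⊆ RCC5Rel.comp (Γ.rel i k) (Γ.rel k j)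

/-- The network is over the subclass `𝒮`. -/
def Over (Γ : RCC5Network n) (𝒮 : Set RCC5Rel) : Prop := ∀ i j, Γ.rel i j ∈ 𝒮

/-- `Γ'` refines `Γ`. -/
def Refines (Γ' Γ : RCC5Network n) : Prop := ∀ i j, Γ'.rel i j ⊆ Γ.rel i j

/-- `Γp` is the a-closure of `Γ`: the pointwise-largest path-consistent refinement. -/
def IsAClosure (Γp Γ : RCC5Network n) : Prop :=
  Γp.PathConsistent ∧ Γp.Refines Γ ∧
    ∀ Γ' : RCC5Network n, Γ'.PathConsistent → Γ'.Refines Γ → Γ'.Refines Γp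

/-- A scenario of (the restriction of) `Γ` on the variable set `V`. -/
def IsScenarioOn (Γ : RCC5Network n) (V : Set (Fin n)) (s : Fin n → Fin n → RCC5Basic) : Prop :=
  (∀ i ∈ V, ∀ j ∈ V, s i j ∈ Γ.rel i j) ∧
  (∀ i ∈ V, ∀ j ∈ V, s j i = RCC5Basic.conv (s i j)) ∧
  (∀ i ∈ V, s i i = RCC5Basic.EQ)

/-- Consistency of a scenario on a variable set `V`. -/
def ScenarioConsistentOn (V : Set (Fin n)) (s : Fin n → Fin n → RCC5Basic) : Prop :=
  ∃ a : Fin n → Region, ∀ i ∈ V, ∀ j ∈ V, RCC5Basic.interp (s i j) (a i) (a j)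

/-- Weakly globally consistent: every consistent scenario of a restriction of `Γ` extends
to a consistent scenario of `Γ`. -/
def WeaklyGloballyConsistent (Γ : RCC5Network n) : Prop :=
  ∀ V : Set (Fin n), V.Nonempty → ∀ s, Γ.IsScenarioOn V s → ScenarioConsistentOn V s →
    ∃ s', Γ.IsScenarioOn Set.univ s' ∧ ScenarioConsistentOn Set.univ s' ∧
      ∀ i ∈ V, ∀ j ∈ V, s' i j = s i j

/-- Minimality: every basic relation in every constraint is feasible. -/
def Minimal (Γ : RCC5Network n) : Prop :=
  ∀ i j, i ≠ j → ∀ α ∈ Γ.rel i j,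
    ∃ a, Γ.IsSolution a ∧ RCC5Basic.interp α (a i) (a j)

/-- Weak composition `CT` along a path `u :: l` of variables. -/
def pathCT (Γ : RCC5Network n) : Fin n → List (Fin n) → RCC5Rel
  | _, [] => Set.univ
  | u, [v] => Γ.rel u v
  | u, v :: w :: rest => RCC5Rel.comp (Γ.rel u v) (pathCT Γ v (w :: rest))

/-- The network obtained from `Γ` by replacing the constraints between `v_i` and `v_j`
(`i ≠ j`) by the universal relation. -/
def removeEdge (Γ : RCC5Network n) (i j : Fin n) : RCC5Network n where
  rel a b := if i ≠ j ∧ ((a = i ∧ b = j) ∨ (a = j ∧ b = i)) then Set.univ else Γ.rel a b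
  conv_rel a b := by
    by_cases h : i ≠ j ∧ ((a = i ∧ b = j) ∨ (a = j ∧ b = i))
    · have h' : i ≠ j ∧ ((b = i ∧ a = j) ∨ (b = j ∧ a = i)) := by tauto
      simp only [if_pos h, if_pos h', RCC5Rel.conv_univ]
    · have h' : ¬(i ≠ j ∧ ((b = i ∧ a = j) ∨ (b = j ∧ a = i))) := by tauto
      simp only [if_neg h, if_neg h']
      exact Γ.conv_rel a b
  diag a := by
    have h : ¬(i ≠ j ∧ ((a = i ∧ a = j) ∨ (a = j ∧ a = i))) := by
      rintro ⟨hij, ⟨h1, h2⟩ | ⟨h1, h2⟩⟩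
      · exact hij (h1.symm.trans h2)
      · exact hij (h2.symm.trans h1)
    simp only [if_neg h]
    exact Γ.diag a

/-- A constraint `(v_i R_ij v_j)` is redundant in `Γ` if the network obtained by replacing
it (and its converse) with the universal relation entails it. -/
def Redundant (Γ : RCC5Network n) (i j : Fin n) : Prop :=
  (Γ.removeEdge i j).Entails i j (Γ.rel i j)

open Classical in
/-- The core of `Γ`: every redundant constraint (and its converse) is replaced by the
universal relation. -/
noncomputable def core (Γ : RCC5Network n) : RCC5Network n where
  rel a b := if a ≠ b ∧ (Γ.Redundant a b ∨ Γ.Redundant b a) then Set.univ else Γ.rel a b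
  conv_rel a b := by
    by_cases h : a ≠ b ∧ (Γ.Redundant a b ∨ Γ.Redundant b a)
    · have h' : b ≠ a ∧ (Γ.Redundant b a ∨ Γ.Redundant a b) := ⟨h.1.symm, h.2.symm⟩
      simp only [if_pos h, if_pos h', RCC5Rel.conv_univ]
    · have h' : ¬(b ≠ a ∧ (Γ.Redundant b a ∨ Γ.Redundant a b)) := by
        intro hc; exact h ⟨hc.1.symm, hc.2.symm⟩
      simp only [if_neg h, if_neg h']
      exact Γ.conv_rel a b
  diag a := by
    have h : ¬(a ≠ a ∧ (Γ.Redundant a a ∨ Γ.Redundant a a)) := fun hc => hc.1 rfl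
    simp only [if_neg h]
    exact Γ.diag a

end RCC5Network

namespace RedAux

open RCC5Basic

instance : Fintype RCC5Basic :=
  ⟨⟨[DR, PO, PP, PPi, EQ], by decide⟩, by intro x; cases x <;> decide⟩

def ctabL : RCC5Basic → RCC5Basic → List RCC5Basic
  | EQ, s => [s]
  | r, EQ => [r]
  | DR, DR => [DR, PO, PP, PPi, EQ]
  | DR, PO => [DR, PO, PP]
  | DR, PP => [DR, PO, PP]
  | DR, PPi => [DR]
  | PO, DR => [DR, PO, PPi]
  | PO, PO => [DR, PO, PP, PPi, EQ]
  | PO, PP => [PO, PP]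
  | PO, PPi => [DR, PO, PPi]
  | PP, DR => [DR]
  | PP, PO => [DR, PO, PP]
  | PP, PP => [PP]
  | PP, PPi => [DR, PO, PP, PPi, EQ]
  | PPi, DR => [DR, PO, PPi]
  | PPi, PO => [PO, PPi]
  | PPi, PP => [PO, PP, PPi, EQ]
  | PPi, PPi => [PPi]

theorem conv_conv : ∀ b : RCC5Basic, b.conv.conv = b := by decide

theorem rotA : ∀ r s b : RCC5Basic, b ∈ ctabL r s → s ∈ ctabL r.conv b := by decide
theorem rotB : ∀ r s b : RCC5Basic, b ∈ ctabL r s → r ∈ ctabL b s.conv := by decide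
theorem convt : ∀ r s b : RCC5Basic, b ∈ ctabL r s → b.conv ∈ ctabL s.conv r.conv := by decide
theorem ctab_assoc : ∀ r s t u : RCC5Basic,
    (∃ b, b ∈ ctabL r s ∧ u ∈ ctabL b t) ↔ (∃ b, b ∈ ctabL s t ∧ u ∈ ctabL r b) := by decide
theorem eq_mem_ctab : ∀ r s : RCC5Basic, EQ ∈ ctabL r s ↔ s = r.conv := by decide
theorem ctab_nonempty : ∀ r s : RCC5Basic, ∃ b, b ∈ ctabL r s := by decide
theorem chain_ggg : ∀ g : RCC5Basic, ∃ c, c ∈ ctabL g.conv g ∧ g ∈ ctabL g c := by decide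
theorem chain_ggg' : ∀ g : RCC5Basic, ∃ c, c ∈ ctabL g g.conv ∧ g ∈ ctabL c g := by decide
theorem eq_mem_self : ∀ g : RCC5Basic, EQ ∈ ctabL g g.conv := by decide


open RCC5Basic

/-! ### Region basics -/

theorem O_of_sub {x y : Region} (h : x.1 ⊆ y.1) : Region.O x y := ⟨x, subset_rfl, h⟩
theorem O_of_sub' {x y : Region} (h : y.1 ⊆ x.1) : Region.O x y := ⟨y, h, subset_rfl⟩
theorem O_symm {x y : Region} (h : Region.O x y) : Region.O y x :=
  let ⟨z, h1, h2⟩ := h; ⟨z, h2, h1⟩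
theorem O_mono_r {x y z : Region} (h : Region.O x y) (hyz : y.1 ⊆ z.1) : Region.O x z :=
  let ⟨w, h1, h2⟩ := h; ⟨w, h1, h2.trans hyz⟩
theorem O_mono_l {x y z : Region} (h : Region.O x y) (hxz : x.1 ⊆ z.1) : Region.O z y :=
  let ⟨w, h1, h2⟩ := h; ⟨w, h1.trans hxz, h2⟩
theorem reg_eq {x y : Region} (h1 : x.1 ⊆ y.1) (h2 : y.1 ⊆ x.1) : x = y :=
  Subtype.ext (h1.antisymm h2)

/-- exactly-one: uniqueness of the basic relation holding between two regions. -/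
theorem interp_unique {b c : RCC5Basic} {x y : Region}
    (hb : b.interp x y) (hc : c.interp x y) : b = c := by
  cases b <;> cases c <;> simp only [RCC5Basic.interp] at hb hc <;>
    first
      | rfl
      | (exfalso; first
          | exact hb hc.1
          | exact hc hb.1
          | exact hb (O_of_sub hc.1)
          | exact hc (O_of_sub hb.1)
          | exact hb (O_of_sub' hc.1)
          | exact hc (O_of_sub' hb.1)
          | exact hb (O_of_sub (hc ▸ subset_rfl))
          | exact hc (O_of_sub (hb ▸ subset_rfl))
          | exact hb.2.1 hc.1
          | exact hc.2.1 hb.1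
          | exact hb.2.2 hc.1
          | exact hc.2.2 hb.1
          | exact hb.2 (reg_eq hb.1 hc.1)
          | exact hc.2 (reg_eq hc.1 hb.1)
          | exact hb.2 hc
          | exact hc.2 hb
          | exact hb.2.1 (hc ▸ subset_rfl)
          | exact hc.2.1 (hb ▸ subset_rfl))

theorem interp_total (x y : Region) : ∃ b : RCC5Basic, b.interp x y := by
  by_cases he : x = y
  · exact ⟨EQ, he⟩
  by_cases h1 : x.1 ⊆ y.1
  · exact ⟨PP, h1, he⟩
  by_cases h2 : y.1 ⊆ x.1
  · exact ⟨PPi, h2, he⟩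
  by_cases ho : Region.O x y
  · exact ⟨PO, ho, h1, h2⟩
  · exact ⟨DR, ho⟩

/-! ### The token model: finite unions of small disks centred at integer points. -/

noncomputable section

def pt (t : ℕ) : ℝ × ℝ := ((t : ℝ), 0)

def disk (t : ℕ) : Set (ℝ × ℝ) := Metric.closedBall (pt t) (1/4)

theorem disk_regular (t : ℕ) : disk t = closure (interior (disk t)) := by
  have h4 : (1/4 : ℝ) ≠ 0 := by norm_num
  rw [disk, interior_closedBall _ h4, closure_ball _ h4]

theorem mem_disk_self (t : ℕ) : pt t ∈ disk t :=
  Metric.mem_closedBall_self (by norm_num)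

theorem disk_disjoint {t u : ℕ} (h : t ≠ u) : disk t ∩ disk u = ∅ := by
  ext p
  simp only [Set.mem_inter_iff, Set.mem_empty_iff_false, iff_false]
  rintro ⟨h1, h2⟩
  have h1' : dist p (pt t) ≤ 1/4 := by simpa [disk, Metric.mem_closedBall] using h1
  have h2' : dist p (pt u) ≤ 1/4 := by simpa [disk, Metric.mem_closedBall] using h2
  have hd : dist (pt t) (pt u) ≤ 1/2 := by
    have := dist_triangle (pt t) p (pt u)
    have h1'' : dist (pt t) p ≤ 1/4 := by rw [dist_comm]; exact h1'
    linarith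
  have : (1 : ℝ) ≤ dist (pt t) (pt u) := by
    have : dist (pt t) (pt u) = |(t : ℝ) - (u : ℝ)| := by
      simp [pt, Prod.dist_eq, Real.dist_eq]
    rw [this]
    have h1 : ((t : ℤ)) ≠ ((u : ℤ)) := by exact_mod_cast h
    have : (1 : ℤ) ≤ |(t : ℤ) - (u : ℤ)| := by
      rcases lt_or_gt_of_ne h1 with hlt | hlt
      · rw [abs_of_nonpos (by omega)]; omega
      · rw [abs_of_nonneg (by omega)]; omega
    calc (1 : ℝ) = ((1 : ℤ) : ℝ) := by norm_num
      _ ≤ ((|(t : ℤ) - (u : ℤ)| : ℤ) : ℝ) := by exact_mod_cast this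
      _ = |(t : ℝ) - (u : ℝ)| := by push_cast [Int.cast_abs]; ring_nf
  linarith

def regSet (S : Finset ℕ) : Set (ℝ × ℝ) := ⋃ t ∈ S, disk t

theorem regSet_closed (S : Finset ℕ) : IsClosed (regSet S) :=
  Set.Finite.isClosed_biUnion S.finite_toSet (fun t _ => Metric.isClosed_closedBall)

theorem regSet_regular (S : Finset ℕ) : regSet S = closure (interior (regSet S)) := by
  apply Set.Subset.antisymm
  · intro p hp
    rcases Set.mem_iUnion₂.mp hp with ⟨t, ht, hpt⟩
    have h1 : disk t ⊆ closure (interior (regSet S)) := by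
      conv_lhs => rw [disk_regular t]
      exact closure_mono (interior_mono (fun q hq => Set.mem_iUnion₂.mpr ⟨t, ht, hq⟩))
    exact h1 hpt
  · calc closure (interior (regSet S)) ⊆ closure (regSet S) := closure_mono interior_subset
      _ = regSet S := (regSet_closed S).closure_eq

def reg (S : Finset ℕ) (hS : S.Nonempty) : Region :=
  ⟨regSet S, ⟨pt hS.choose, Set.mem_iUnion₂.mpr ⟨hS.choose, hS.choose_spec, mem_disk_self _⟩⟩,
    regSet_regular S⟩

theorem regSet_subset_iff {S T : Finset ℕ} : regSet S ⊆ regSet T ↔ S ⊆ T := by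
  constructor
  · intro h t ht
    have := h (Set.mem_iUnion₂.mpr ⟨t, ht, mem_disk_self t⟩)
    rcases Set.mem_iUnion₂.mp this with ⟨u, hu, hpu⟩
    by_cases htu : t = u
    · exact htu ▸ hu
    · exact absurd (Set.mem_inter (mem_disk_self t) hpu)
        (by rw [disk_disjoint htu]; exact fun h => h)
  · intro h p hp
    rcases Set.mem_iUnion₂.mp hp with ⟨t, ht, hpt⟩
    exact Set.mem_iUnion₂.mpr ⟨t, h ht, hpt⟩

theorem reg_sub_iff {S T : Finset ℕ} (hS : S.Nonempty) (hT : T.Nonempty) :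
    (reg S hS).1 ⊆ (reg T hT).1 ↔ S ⊆ T := regSet_subset_iff

theorem reg_eq_iff {S T : Finset ℕ} (hS : S.Nonempty) (hT : T.Nonempty) :
    reg S hS = reg T hT ↔ S = T := by
  constructor
  · intro h
    have h1 : regSet S = regSet T := congrArg Subtype.val h
    exact Finset.Subset.antisymm (regSet_subset_iff.mp h1.le) (regSet_subset_iff.mp h1.ge)
  · rintro rfl; rfl

theorem reg_O_iff {S T : Finset ℕ} (hS : S.Nonempty) (hT : T.Nonempty) :
    Region.O (reg S hS) (reg T hT) ↔ (S ∩ T).Nonempty := by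
  constructor
  · rintro ⟨z, h1, h2⟩
    obtain ⟨p, hp⟩ := z.2.1
    rcases Set.mem_iUnion₂.mp (h1 hp) with ⟨t, ht, hpt⟩
    rcases Set.mem_iUnion₂.mp (h2 hp) with ⟨u, hu, hpu⟩
    by_cases htu : t = u
    · exact ⟨t, Finset.mem_inter.mpr ⟨ht, htu ▸ hu⟩⟩
    · exact absurd (Set.mem_inter hpt hpu) (by rw [disk_disjoint htu]; exact fun h => h)
  · rintro ⟨t, ht⟩
    rcases Finset.mem_inter.mp ht with ⟨h1, h2⟩
    refine ⟨⟨disk t, ⟨pt t, mem_disk_self t⟩, disk_regular t⟩, ?_, ?_⟩ <;>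
      exact fun q hq => Set.mem_iUnion₂.mpr ⟨t, by assumption, hq⟩

/-- The basic relation determined by two finite sets of tokens. -/
def brel (S T : Finset ℕ) : RCC5Basic :=
  if S = T then EQ else if S ⊆ T then PP else if T ⊆ S then PPi
  else if (S ∩ T).Nonempty then PO else DR

theorem interp_brel {S T : Finset ℕ} (hS : S.Nonempty) (hT : T.Nonempty) :
    (brel S T).interp (reg S hS) (reg T hT) := by
  unfold brel
  by_cases he : S = T
  · rw [if_pos he]
    exact (reg_eq_iff hS hT).mpr he
  rw [if_neg he]
  by_cases h1 : S ⊆ T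
  · rw [if_pos h1]
    exact ⟨(reg_sub_iff hS hT).mpr h1, fun hc => he ((reg_eq_iff hS hT).mp hc)⟩
  rw [if_neg h1]
  by_cases h2 : T ⊆ S
  · rw [if_pos h2]
    exact ⟨(reg_sub_iff hT hS).mpr h2, fun hc => he ((reg_eq_iff hS hT).mp hc)⟩
  rw [if_neg h2]
  by_cases h3 : (S ∩ T).Nonempty
  · rw [if_pos h3]
    exact ⟨(reg_O_iff hS hT).mpr h3, fun hc => h1 ((reg_sub_iff hS hT).mp hc),
      fun hc => h2 ((reg_sub_iff hT hS).mp hc)⟩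
  · rw [if_neg h3]
    exact fun hc => h3 ((reg_O_iff hS hT).mp hc)

end

end RedAux

namespace RedAux
open RCC5Basic

/-! ### Soundness of the composition table -/

theorem sound {r s b : RCC5Basic} {x y z : Region}
    (h1 : r.interp x y) (h2 : s.interp y z) (h3 : b.interp x z) : b ∈ ctabL r s := by
  cases r
  case EQ =>
    obtain rfl : x = y := h1
    have hbs := interp_unique h3 h2
    subst hbs
    cases b <;> simp [ctabL]
  all_goals
    cases s
  case EQ =>
    obtain rfl : y = z := h2
    have hbr := interp_unique h3 h1
    subst hbr
    simp [ctabL]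
  case EQ =>
    obtain rfl : y = z := h2
    have hbr := interp_unique h3 h1
    subst hbr
    simp [ctabL]
  case EQ =>
    obtain rfl : y = z := h2
    have hbr := interp_unique h3 h1
    subst hbr
    simp [ctabL]
  case EQ =>
    obtain rfl : y = z := h2
    have hbr := interp_unique h3 h1
    subst hbr
    simp [ctabL]
  all_goals
    cases b <;>
    simp only [RCC5Basic.interp] at h1 h2 h3 <;>
    first
    | decide
    | (exfalso; first
        | exact h1 (O_of_sub' (h2.1.trans h3.1))
        | exact h1 (O_of_sub' (by subst h3; exact h2.1))
        | exact h1 (O_mono_r h3.1 h2.1)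
        | exact h1 (O_of_sub (h3.1.trans h2.1))
        | exact h1 ⟨z, h3.1, h2.1⟩
        | exact h1 (O_of_sub (by subst h3; exact h2.1))
        | exact h1 (O_symm (O_mono_r h2.1 h3.1))
        | exact h1 (by subst h3; exact O_symm h2.1)
        | exact h2 (O_mono_r (O_symm h1.1) h3.1)
        | exact h2 (by subst h3; exact O_symm h1.1)
        | exact h3 (O_mono_r h1.1 h2.1)
        | exact h1.2.2 (h2.1.trans h3.1)
        | exact h1.2.2 (by subst h3; exact h2.1)
        | exact h1.2.1 (h3.1.trans h2.1)
        | exact h1.2.1 (by subst h3; exact h2.1)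
        | exact h2 (O_symm (O_mono_r (O_symm h3.1) h1.1))
        | exact h2 ⟨x, h1.1, h3.1⟩
        | exact h2 (O_of_sub' (h3.1.trans h1.1))
        | exact h2 (O_of_sub' (by subst h3; exact h1.1))
        | exact h2.2.2 (h3.1.trans h1.1)
        | exact h2.2.2 (by subst h3; exact h1.1)
        | exact h3 (O_of_sub (h1.1.trans h2.1))
        | exact h3.2.1 (h1.1.trans h2.1)
        | exact h3.2 (reg_eq (h1.1.trans h2.1) h3.1)
        | exact h1.2 (reg_eq h1.1 (by subst h3; exact h2.1))
        | exact h2 (O_of_sub (h1.1.trans h3.1))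
        | exact h2 (O_of_sub (by subst h3; exact h1.1))
        | exact h3 (O_mono_l h2.1 h1.1)
        | exact h2.2.1 (h1.1.trans h3.1)
        | exact h2.2.1 (by subst h3; exact h1.1)
        | exact h3 ⟨y, h1.1, h2.1⟩
        | exact h3 (O_of_sub' (h2.1.trans h1.1))
        | exact h3.2.2 (h2.1.trans h1.1)
        | exact h3.2 (reg_eq h3.1 (h2.1.trans h1.1))
        | exact h1.2 (reg_eq (by subst h3; exact h2.1) h1.1))

end RedAux

namespace RedAux
open RCC5Basic

def wit : RCC5Basic → RCC5Basic → RCC5Basic → List ℕ × List ℕ × List ℕ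
  | .DR, .DR, .DR => ([0], [1], [2])
  | .DR, .DR, .PO => ([0,1], [2], [0,3])
  | .DR, .DR, .PP => ([0], [1], [0,2])
  | .DR, .DR, .PPi => ([0,1], [2], [0])
  | .DR, .DR, .EQ => ([0], [1], [0])
  | .DR, .PO, .DR => ([0], [1,2], [1,3])
  | .DR, .PO, .PO => ([0,1], [2,3], [0,2])
  | .DR, .PO, .PP => ([0], [1,2], [0,1])
  | .DR, .PP, .DR => ([0], [1], [1,2])
  | .DR, .PP, .PO => ([0,1], [2], [0,2])
  | .DR, .PP, .PP => ([0], [1], [0,1])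
  | .DR, .PPi, .DR => ([0], [1,2], [1])
  | .DR, .EQ, .DR => ([0], [1], [1])
  | .PO, .DR, .DR => ([0,1], [0,2], [3])
  | .PO, .DR, .PO => ([0,1], [0,2], [1,3])
  | .PO, .DR, .PPi => ([0,1], [0,2], [1])
  | .PO, .PO, .DR => ([0,1], [0,2], [2,3])
  | .PO, .PO, .PO => ([0,1], [0,2], [0,3])
  | .PO, .PO, .PP => ([0,1], [0,2], [0,1,3])
  | .PO, .PO, .PPi => ([0,1,2], [0,3], [0,1])
  | .PO, .PO, .EQ => ([0,1], [0,2], [0,1])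
  | .PO, .PP, .PO => ([0,1], [0,2], [0,2,3])
  | .PO, .PP, .PP => ([0,1], [0,2], [0,1,2])
  | .PO, .PPi, .DR => ([0,1], [0,2], [2])
  | .PO, .PPi, .PO => ([0,1], [0,2,3], [0,2])
  | .PO, .PPi, .PPi => ([0,1], [0,2], [0])
  | .PO, .EQ, .PO => ([0,1], [0,2], [0,2])
  | .PP, .DR, .DR => ([0], [0,1], [2])
  | .PP, .PO, .DR => ([0], [0,1], [1,2])
  | .PP, .PO, .PO => ([0,1], [0,1,2], [0,3])
  | .PP, .PO, .PP => ([0], [0,1], [0,2])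
  | .PP, .PP, .PP => ([0], [0,1], [0,1,2])
  | .PP, .PPi, .DR => ([0], [0,1], [1])
  | .PP, .PPi, .PO => ([0,1], [0,1,2], [0,2])
  | .PP, .PPi, .PP => ([0], [0,1,2], [0,1])
  | .PP, .PPi, .PPi => ([0,1], [0,1,2], [0])
  | .PP, .PPi, .EQ => ([0], [0,1], [0])
  | .PP, .EQ, .PP => ([0], [0,1], [0,1])
  | .PPi, .DR, .DR => ([0,1], [0], [2])
  | .PPi, .DR, .PO => ([0,1], [0], [1,2])
  | .PPi, .DR, .PPi => ([0,1], [0], [1])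
  | .PPi, .PO, .PO => ([0,1,2], [0,1], [0,3])
  | .PPi, .PO, .PPi => ([0,1,2], [0,1], [0,2])
  | .PPi, .PP, .PO => ([0,1], [0], [0,2])
  | .PPi, .PP, .PP => ([0,1], [0], [0,1,2])
  | .PPi, .PP, .PPi => ([0,1,2], [0], [0,1])
  | .PPi, .PP, .EQ => ([0,1], [0], [0,1])
  | .PPi, .PPi, .PPi => ([0,1,2], [0,1], [0])
  | .PPi, .EQ, .PPi => ([0,1], [0], [0])
  | .EQ, .DR, .DR => ([0], [0], [1])
  | .EQ, .PO, .PO => ([0,1], [0,1], [0,2])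
  | .EQ, .PP, .PP => ([0], [0], [0,1])
  | .EQ, .PPi, .PPi => ([0,1], [0,1], [0])
  | .EQ, .EQ, .EQ => ([0], [0], [0])
  | _, _, _ => ([0], [0], [0])

def bcomp (R S : RCC5Rel) : RCC5Rel := {b | ∃ r ∈ R, ∃ s ∈ S, b ∈ ctabL r s}

theorem complete : ∀ r s b : RCC5Basic, b ∈ ctabL r s →
    ∃ x y z : Region, r.interp x y ∧ s.interp y z ∧ b.interp x z := by
  have key : ∀ r s b : RCC5Basic, b ∈ ctabL r s →
      (wit r s b).1.toFinset.Nonempty ∧ (wit r s b).2.1.toFinset.Nonempty ∧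
      (wit r s b).2.2.toFinset.Nonempty ∧
      brel (wit r s b).1.toFinset (wit r s b).2.1.toFinset = r ∧
      brel (wit r s b).2.1.toFinset (wit r s b).2.2.toFinset = s ∧
      brel (wit r s b).1.toFinset (wit r s b).2.2.toFinset = b := by decide
  intro r s b hb
  obtain ⟨hS, hT, hU, e1, e2, e3⟩ := key r s b hb
  refine ⟨reg _ hS, reg _ hT, reg _ hU, ?_, ?_, ?_⟩
  · have h := interp_brel hS hT; rw [e1] at h; exact h
  · have h := interp_brel hT hU; rw [e2] at h; exact h
  · have h := interp_brel hS hU; rw [e3] at h; exact h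

theorem comp_eq (R S : RCC5Rel) : RCC5Rel.comp R S = bcomp R S := by
  ext b
  constructor
  · rintro ⟨x, z, hb, y, ⟨r, hr, hrxy⟩, ⟨s, hs, hsyz⟩⟩
    exact ⟨r, hr, s, hs, sound hrxy hsyz hb⟩
  · rintro ⟨r, hr, s, hs, hb⟩
    obtain ⟨x, y, z, h1, h2, h3⟩ := complete r s b hb
    exact ⟨x, z, h3, y, ⟨r, hr, h1⟩, ⟨s, hs, h2⟩⟩

/-! ### Algebraic laws for `bcomp` and `conv` -/

theorem bcomp_mono {R R' S S' : RCC5Rel} (h1 : R ⊆ R') (h2 : S ⊆ S') :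
    bcomp R S ⊆ bcomp R' S' := by
  rintro b ⟨r, hr, s, hs, hb⟩; exact ⟨r, h1 hr, s, h2 hs, hb⟩

theorem bcomp_assoc (R S T : RCC5Rel) : bcomp (bcomp R S) T = bcomp R (bcomp S T) := by
  ext b
  constructor
  · rintro ⟨c, ⟨r, hr, s, hs, hc⟩, t, ht, hb⟩
    obtain ⟨d, hd1, hd2⟩ := (ctab_assoc r s t b).mp ⟨c, hc, hb⟩
    exact ⟨r, hr, d, ⟨s, hs, t, ht, hd1⟩, hd2⟩
  · rintro ⟨r, hr, d, ⟨s, hs, t, ht, hd⟩, hb⟩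
    obtain ⟨c, hc1, hc2⟩ := (ctab_assoc r s t b).mpr ⟨d, hd, hb⟩
    exact ⟨c, ⟨r, hr, s, hs, hc1⟩, t, ht, hc2⟩

theorem mem_conv {R : RCC5Rel} {b : RCC5Basic} : b ∈ RCC5Rel.conv R ↔ b.conv ∈ R := Iff.rfl

theorem conv_conv_rel (R : RCC5Rel) : RCC5Rel.conv (RCC5Rel.conv R) = R := by
  ext b; simp [RCC5Rel.conv, conv_conv]

theorem conv_singleton (g : RCC5Basic) : RCC5Rel.conv {g} = {g.conv} := by
  ext b
  simp only [RCC5Rel.conv, Set.mem_setOf_eq, Set.mem_singleton_iff]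
  constructor
  · intro h; rw [← conv_conv b, h]
  · intro h; rw [h, conv_conv]

theorem conv_inter (R S : RCC5Rel) :
    RCC5Rel.conv (R ∩ S) = RCC5Rel.conv R ∩ RCC5Rel.conv S := rfl

theorem conv_mono {R S : RCC5Rel} (h : R ⊆ S) : RCC5Rel.conv R ⊆ RCC5Rel.conv S :=
  fun _ hb => h hb

theorem conv_bcomp (R S : RCC5Rel) :
    RCC5Rel.conv (bcomp R S) = bcomp (RCC5Rel.conv S) (RCC5Rel.conv R) := by
  ext b
  constructor
  · rintro ⟨r, hr, s, hs, hb⟩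
    have hcv := convt r s b.conv hb
    rw [conv_conv] at hcv
    exact ⟨s.conv, mem_conv.mpr (by rw [conv_conv]; exact hs),
      r.conv, mem_conv.mpr (by rw [conv_conv]; exact hr), hcv⟩
  · rintro ⟨s, hs, r, hr, hb⟩
    show b.conv ∈ bcomp R S
    have := convt s r b hb
    exact ⟨r.conv, hr, s.conv, hs, this⟩

theorem ctab_eq_right : ∀ r : RCC5Basic, ctabL r EQ = [r] := by decide

theorem bcomp_id_left (R : RCC5Rel) : bcomp {EQ} R = R := by
  ext b
  constructor
  · rintro ⟨r, rfl, s, hs, hb⟩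
    have : b = s := by simpa [ctabL] using hb
    exact this ▸ hs
  · intro hb; exact ⟨EQ, rfl, b, hb, by simp [ctabL]⟩

theorem bcomp_id_right (R : RCC5Rel) : bcomp R {EQ} = R := by
  ext b
  constructor
  · rintro ⟨r, hr, s, rfl, hb⟩
    have : b = r := by simpa [ctab_eq_right] using hb
    exact this ▸ hr
  · intro hb; exact ⟨b, hb, EQ, rfl, by simp [ctab_eq_right]⟩

theorem eq_mem_bcomp {U V : RCC5Rel} : EQ ∈ bcomp U V ↔ ∃ r ∈ U, r.conv ∈ V := by
  constructor
  · rintro ⟨r, hr, s, hs, hb⟩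
    exact ⟨r, hr, ((eq_mem_ctab r s).mp hb) ▸ hs⟩
  · rintro ⟨r, hr, hc⟩
    exact ⟨r, hr, r.conv, hc, (eq_mem_ctab r r.conv).mpr rfl⟩

/-! ### Distributive subalgebra toolkit -/

variable {𝒮 : Set RCC5Rel}

theorem bcomp_mem (h𝒮 : IsDistributiveSubalgebra 𝒮) {R S : RCC5Rel}
    (hR : R ∈ 𝒮) (hS : S ∈ 𝒮) : bcomp R S ∈ 𝒮 :=
  comp_eq R S ▸ h𝒮.2.2.1 R hR S hS

theorem inter_mem (h𝒮 : IsDistributiveSubalgebra 𝒮) {R S : RCC5Rel}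
    (hR : R ∈ 𝒮) (hS : S ∈ 𝒮) (hne : (R ∩ S).Nonempty) : R ∩ S ∈ 𝒮 :=
  h𝒮.2.2.2.1 R hR S hS hne

theorem conv_mem (h𝒮 : IsDistributiveSubalgebra 𝒮) {R : RCC5Rel} (hR : R ∈ 𝒮) :
    RCC5Rel.conv R ∈ 𝒮 := h𝒮.2.1 R hR

theorem sgl_mem (h𝒮 : IsDistributiveSubalgebra 𝒮) (b : RCC5Basic) : ({b} : RCC5Rel) ∈ 𝒮 :=
  h𝒮.1 b

theorem ddistl (h𝒮 : IsDistributiveSubalgebra 𝒮) {R T1 T2 : RCC5Rel}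
    (hR : R ∈ 𝒮) (h1 : T1 ∈ 𝒮) (h2 : T2 ∈ 𝒮) (hne : (T1 ∩ T2).Nonempty) :
    bcomp R (T1 ∩ T2) = bcomp R T1 ∩ bcomp R T2 := by
  have := (h𝒮.2.2.2.2 R hR T1 h1 T2 h2 hne).1
  rwa [comp_eq, comp_eq, comp_eq] at this

theorem ddistr (h𝒮 : IsDistributiveSubalgebra 𝒮) {R T1 T2 : RCC5Rel}
    (hR : R ∈ 𝒮) (h1 : T1 ∈ 𝒮) (h2 : T2 ∈ 𝒮) (hne : (T1 ∩ T2).Nonempty) :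
    bcomp (T1 ∩ T2) R = bcomp T1 R ∩ bcomp T2 R := by
  have := (h𝒮.2.2.2.2 R hR T1 h1 T2 h2 hne).2
  rwa [comp_eq, comp_eq, comp_eq] at this

theorem univ_mem (h𝒮 : IsDistributiveSubalgebra 𝒮) : (Set.univ : RCC5Rel) ∈ 𝒮 := by
  have huniv : bcomp {PP} {PPi} = (Set.univ : RCC5Rel) := by
    apply Set.eq_univ_of_forall
    intro b
    exact ⟨PP, rfl, PPi, rfl, by cases b <;> decide⟩
  exact huniv ▸ bcomp_mem h𝒮 (sgl_mem h𝒮 PP) (sgl_mem h𝒮 PPi)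

theorem helly3 (h𝒮 : IsDistributiveSubalgebra 𝒮) {X Y Z : RCC5Rel}
    (hX : X ∈ 𝒮) (hY : Y ∈ 𝒮) (hZ : Z ∈ 𝒮)
    (hXY : (X ∩ Y).Nonempty) (hXZ : (X ∩ Z).Nonempty) (hYZ : (Y ∩ Z).Nonempty) :
    (X ∩ Y ∩ Z).Nonempty := by
  have hZ' : RCC5Rel.conv Z ∈ 𝒮 := conv_mem h𝒮 hZ
  have hd : bcomp (X ∩ Y) (RCC5Rel.conv Z) =
      bcomp X (RCC5Rel.conv Z) ∩ bcomp Y (RCC5Rel.conv Z) :=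
    ddistr h𝒮 hZ' hX hY hXY
  have hmemX : EQ ∈ bcomp X (RCC5Rel.conv Z) := by
    obtain ⟨r, hrX, hrZ⟩ := hXZ
    exact eq_mem_bcomp.mpr ⟨r, hrX, mem_conv.mpr (by rw [conv_conv]; exact hrZ)⟩
  have hmemY : EQ ∈ bcomp Y (RCC5Rel.conv Z) := by
    obtain ⟨r, hrY, hrZ⟩ := hYZ
    exact eq_mem_bcomp.mpr ⟨r, hrY, mem_conv.mpr (by rw [conv_conv]; exact hrZ)⟩
  have : EQ ∈ bcomp (X ∩ Y) (RCC5Rel.conv Z) := hd ▸ ⟨hmemX, hmemY⟩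
  obtain ⟨r, hrXY, hrZ⟩ := eq_mem_bcomp.mp this
  have := mem_conv.mp hrZ
  rw [conv_conv] at this
  exact ⟨r, hrXY, this⟩

end RedAux

namespace RedAux
open RCC5Basic

theorem rot3 : ∀ r s b : RCC5Basic, b ∈ ctabL r s → s.conv ∈ ctabL b.conv r := by decide

variable {n : ℕ}

theorem pc_bcomp {Γ : RCC5Network n} (hpc : Γ.PathConsistent) (k m l : Fin n) :
    Γ.rel k l ⊆ bcomp (Γ.rel k m) (Γ.rel m l) := by
  have := (hpc k l m).2
  rwa [comp_eq] at this

theorem pc_ne {Γ : RCC5Network n} (hpc : Γ.PathConsistent) (k l : Fin n) :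
    (Γ.rel k l).Nonempty := (hpc k l k).1

theorem conv_mem_rel {Γ : RCC5Network n} {k l : Fin n} {b : RCC5Basic}
    (hb : b ∈ Γ.rel k l) : b.conv ∈ Γ.rel l k := by
  rw [Γ.conv_rel k l]
  exact mem_conv.mpr (by rw [conv_conv]; exact hb)

/-- The propagation relation `R_ki ⋄ {g} ⋄ R_jl`. -/
def Ae (Γ : RCC5Network n) (i j : Fin n) (g : RCC5Basic) (k l : Fin n) : RCC5Rel :=
  bcomp (Γ.rel k i) (bcomp {g} (Γ.rel j l))

theorem conv_Ae (Γ : RCC5Network n) (i j : Fin n) (g : RCC5Basic) (k l : Fin n) :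
    RCC5Rel.conv (Ae Γ i j g k l) = Ae Γ j i g.conv l k := by
  unfold Ae
  rw [conv_bcomp, conv_bcomp, conv_singleton, ← Γ.conv_rel, ← bcomp_assoc, ← Γ.conv_rel]

theorem Ae_mem {𝒮 : Set RCC5Rel} (h𝒮 : IsDistributiveSubalgebra 𝒮) {Γ : RCC5Network n}
    (hover : Γ.Over 𝒮) (i j : Fin n) (g : RCC5Basic) (k l : Fin n) :
    Ae Γ i j g k l ∈ 𝒮 :=
  bcomp_mem h𝒮 (hover k i) (bcomp_mem h𝒮 (sgl_mem h𝒮 g) (hover j l))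

theorem Ae_diag (Γ : RCC5Network n) (i j : Fin n) (g : RCC5Basic) :
    Ae Γ i j g i j = {g} := by
  unfold Ae
  rw [Γ.diag, Γ.diag, bcomp_id_left, bcomp_id_right]

theorem sub_RA (Γ : RCC5Network n) (hpc : Γ.PathConsistent) (i j : Fin n) (g : RCC5Basic)
    (k m l : Fin n) : Ae Γ i j g k l ⊆ bcomp (Γ.rel k m) (Ae Γ i j g m l) := by
  unfold Ae
  calc bcomp (Γ.rel k i) (bcomp {g} (Γ.rel j l))
      ⊆ bcomp (bcomp (Γ.rel k m) (Γ.rel m i)) (bcomp {g} (Γ.rel j l)) :=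
        bcomp_mono (pc_bcomp hpc k m i) subset_rfl
    _ = bcomp (Γ.rel k m) (bcomp (Γ.rel m i) (bcomp {g} (Γ.rel j l))) := bcomp_assoc _ _ _

theorem sub_AR (Γ : RCC5Network n) (hpc : Γ.PathConsistent) (i j : Fin n) (g : RCC5Basic)
    (k m l : Fin n) : Ae Γ i j g k l ⊆ bcomp (Ae Γ i j g k m) (Γ.rel m l) := by
  unfold Ae
  calc bcomp (Γ.rel k i) (bcomp {g} (Γ.rel j l))
      ⊆ bcomp (Γ.rel k i) (bcomp {g} (bcomp (Γ.rel j m) (Γ.rel m l))) :=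
        bcomp_mono subset_rfl (bcomp_mono subset_rfl (pc_bcomp hpc j m l))
    _ = bcomp (bcomp (Γ.rel k i) (bcomp {g} (Γ.rel j m))) (Γ.rel m l) := by
        simp only [bcomp_assoc]

theorem sub_AA (Γ : RCC5Network n) (hpc : Γ.PathConsistent) {i j : Fin n} {g : RCC5Basic}
    (hg : g ∈ Γ.rel i j) (k m l : Fin n) :
    Ae Γ i j g k l ⊆ bcomp (Ae Γ i j g k m) (Ae Γ i j g m l) := by
  have hgc : ({g.conv} : RCC5Rel) ⊆ bcomp (Γ.rel j m) (Γ.rel m i) :=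
    Set.singleton_subset_iff.mpr (pc_bcomp hpc j m i (conv_mem_rel hg))
  have h0 : ({g} : RCC5Rel) ⊆ bcomp {g} (bcomp {g.conv} {g}) := by
    obtain ⟨c, hc1, hc2⟩ := chain_ggg g
    exact Set.singleton_subset_iff.mpr ⟨g, rfl, c, ⟨g.conv, rfl, g, rfl, hc1⟩, hc2⟩
  have hstep : ({g} : RCC5Rel) ⊆ bcomp {g} (bcomp (Γ.rel j m) (bcomp (Γ.rel m i) {g})) := by
    refine h0.trans (bcomp_mono subset_rfl ?_)
    calc bcomp ({g.conv} : RCC5Rel) ({g} : RCC5Rel)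
          ⊆ bcomp (bcomp (Γ.rel j m) (Γ.rel m i)) {g} :=
          bcomp_mono hgc subset_rfl
      _ = bcomp (Γ.rel j m) (bcomp (Γ.rel m i) {g}) := bcomp_assoc _ _ _
  unfold Ae
  calc bcomp (Γ.rel k i) (bcomp {g} (Γ.rel j l))
      ⊆ bcomp (Γ.rel k i)
          (bcomp (bcomp {g} (bcomp (Γ.rel j m) (bcomp (Γ.rel m i) {g}))) (Γ.rel j l)) :=
        bcomp_mono subset_rfl (bcomp_mono hstep subset_rfl)
    _ = bcomp (bcomp (Γ.rel k i) (bcomp {g} (Γ.rel j m)))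
          (bcomp (Γ.rel m i) (bcomp {g} (Γ.rel j l))) := by
        simp only [bcomp_assoc]

theorem sub_AB (Γ : RCC5Network n) (hpc : Γ.PathConsistent) {i j : Fin n} {g : RCC5Basic}
    (k m l : Fin n) :
    Γ.rel k l ⊆ bcomp (Ae Γ i j g k m) (Ae Γ j i g.conv m l) := by
  have hEQjj : ({EQ} : RCC5Rel) ⊆ bcomp (Γ.rel j m) (Γ.rel m j) := by
    rw [← Γ.diag j]
    exact pc_bcomp hpc j m j
  have hEQsub : ({EQ} : RCC5Rel) ⊆ bcomp {g} (bcomp (Γ.rel j m) (bcomp (Γ.rel m j) {g.conv})) := by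
    have h1 : ({EQ} : RCC5Rel) ⊆ bcomp {g} {g.conv} :=
      Set.singleton_subset_iff.mpr ⟨g, rfl, g.conv, rfl, eq_mem_self g⟩
    have h2 : ({g.conv} : RCC5Rel) = bcomp {EQ} {g.conv} := (bcomp_id_left _).symm
    calc ({EQ} : RCC5Rel) ⊆ bcomp {g} {g.conv} := h1
      _ = bcomp {g} (bcomp {EQ} {g.conv}) := by rw [← h2]
      _ ⊆ bcomp {g} (bcomp (bcomp (Γ.rel j m) (Γ.rel m j)) {g.conv}) :=
          bcomp_mono subset_rfl (bcomp_mono hEQjj subset_rfl)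
      _ = bcomp {g} (bcomp (Γ.rel j m) (bcomp (Γ.rel m j) {g.conv})) := by
          rw [bcomp_assoc]
  unfold Ae
  calc Γ.rel k l ⊆ bcomp (Γ.rel k i) (Γ.rel i l) := pc_bcomp hpc k i l
    _ = bcomp (Γ.rel k i) (bcomp {EQ} (Γ.rel i l)) := by rw [bcomp_id_left]
    _ ⊆ bcomp (Γ.rel k i)
        (bcomp (bcomp {g} (bcomp (Γ.rel j m) (bcomp (Γ.rel m j) {g.conv}))) (Γ.rel i l)) :=
        bcomp_mono subset_rfl (bcomp_mono hEQsub subset_rfl)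
    _ = bcomp (bcomp (Γ.rel k i) (bcomp {g} (Γ.rel j m)))
        (bcomp (Γ.rel m j) (bcomp {g.conv} (Γ.rel i l))) := by
        simp only [bcomp_assoc]

theorem ne_RA (Γ : RCC5Network n) (hpc : Γ.PathConsistent) {i j : Fin n} {g : RCC5Basic}
    (hg : g ∈ Γ.rel i j) (k l : Fin n) : (Γ.rel k l ∩ Ae Γ i j g k l).Nonempty := by
  obtain ⟨a, ha, b, hb, hab⟩ := pc_bcomp hpc i k j hg
  obtain ⟨δ, hδ, e, he, hbde⟩ := pc_bcomp hpc k l j hb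
  have h1 : b ∈ ctabL a.conv g := rotA a b g hab
  have h2 : δ ∈ ctabL b e.conv := rotB δ e b hbde
  refine ⟨δ, hδ, ?_⟩
  have hmem : δ ∈ bcomp (bcomp (Γ.rel k i) {g}) (Γ.rel j l) :=
    ⟨b, ⟨a.conv, conv_mem_rel ha, g, rfl, h1⟩, e.conv, conv_mem_rel he, h2⟩
  rw [bcomp_assoc] at hmem
  exact hmem

theorem ne_AB (Γ : RCC5Network n) (hpc : Γ.PathConsistent) {i j : Fin n} {g : RCC5Basic}
    (hg : g ∈ Γ.rel i j) (k l : Fin n) :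
    (Ae Γ i j g k l ∩ Ae Γ j i g.conv k l).Nonempty := by
  obtain ⟨a, ha, b, hb, hab⟩ := pc_bcomp hpc i k j hg
  obtain ⟨f, hf, e, he, hfe⟩ := pc_bcomp hpc i l j hg
  obtain ⟨δ, hδ⟩ := ctab_nonempty b e.conv
  have h1 : b ∈ ctabL a.conv g := rotA a b g hab
  have h2 : e.conv ∈ ctabL g.conv f := rot3 f e g hfe
  refine ⟨δ, ?_, ?_⟩
  · have hmem : δ ∈ bcomp (bcomp (Γ.rel k i) {g}) (Γ.rel j l) :=
      ⟨b, ⟨a.conv, conv_mem_rel ha, g, rfl, h1⟩, e.conv, conv_mem_rel he, hδ⟩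
    rw [bcomp_assoc] at hmem
    exact hmem
  · exact ⟨b, hb, e.conv, ⟨g.conv, rfl, f, hf, h2⟩, hδ⟩

theorem eq_mem_Ae (Γ : RCC5Network n) (hpc : Γ.PathConsistent) {i j : Fin n} {g : RCC5Basic}
    (hg : g ∈ Γ.rel i j) (k : Fin n) : EQ ∈ Ae Γ i j g k k := by
  obtain ⟨u, hu, v, hv, huv⟩ := pc_bcomp hpc j k i (conv_mem_rel hg)
  have h1 : v.conv ∈ ctabL g u := by
    have := rot3 u v g.conv huv
    rwa [conv_conv] at this
  exact eq_mem_bcomp.mpr ⟨v, hv, ⟨g, rfl, u, hu, h1⟩⟩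

theorem g_mem_Bii (Γ : RCC5Network n) {i j : Fin n} {g : RCC5Basic} (hg : g ∈ Γ.rel i j) :
    g ∈ Ae Γ j i g.conv i j := by
  obtain ⟨c, hc1, hc2⟩ := chain_ggg g
  exact ⟨g, hg, c, ⟨g.conv, rfl, g, hg, hc1⟩, hc2⟩

end RedAux

namespace RedAux
open RCC5Basic

theorem refineEdge {n : ℕ} {𝒮 : Set RCC5Rel} (h𝒮 : IsDistributiveSubalgebra 𝒮)
    (Γ : RCC5Network n) (hover : Γ.Over 𝒮) (hpc : Γ.PathConsistent)
    (i j : Fin n) (g : RCC5Basic) (hg : g ∈ Γ.rel i j) :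
    ∃ Γ' : RCC5Network n, Γ'.PathConsistent ∧ Γ'.Over 𝒮 ∧ Γ'.Refines Γ ∧ Γ'.rel i j = {g} := by
  have hg' : g.conv ∈ Γ.rel j i := conv_mem_rel hg
  have hAm : ∀ k l, Ae Γ i j g k l ∈ 𝒮 := Ae_mem h𝒮 hover i j g
  have hBm : ∀ k l, Ae Γ j i g.conv k l ∈ 𝒮 := Ae_mem h𝒮 hover j i g.conv
  have hne : ∀ k l, (Γ.rel k l ∩ Ae Γ i j g k l ∩ Ae Γ j i g.conv k l).Nonempty := fun k l =>
    helly3 h𝒮 (hover k l) (hAm k l) (hBm k l) (ne_RA Γ hpc hg k l) (ne_RA Γ hpc hg' k l)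
      (ne_AB Γ hpc hg k l)
  have hU1m : ∀ k l, Γ.rel k l ∩ Ae Γ i j g k l ∈ 𝒮 := fun k l =>
    inter_mem h𝒮 (hover k l) (hAm k l) (ne_RA Γ hpc hg k l)
  have hUm : ∀ k l, Γ.rel k l ∩ Ae Γ i j g k l ∩ Ae Γ j i g.conv k l ∈ 𝒮 := fun k l =>
    inter_mem h𝒮 (hU1m k l) (hBm k l) (hne k l)
  refine ⟨{ rel := fun k l => Γ.rel k l ∩ Ae Γ i j g k l ∩ Ae Γ j i g.conv k l,
            conv_rel := ?_, diag := ?_ }, ?_, ?_, ?_, ?_⟩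
  · intro k l
    show Γ.rel l k ∩ Ae Γ i j g l k ∩ Ae Γ j i g.conv l k =
      RCC5Rel.conv (Γ.rel k l ∩ Ae Γ i j g k l ∩ Ae Γ j i g.conv k l)
    rw [conv_inter, conv_inter, ← Γ.conv_rel, conv_Ae, conv_Ae, conv_conv,
      Set.inter_right_comm]
  · intro k
    show Γ.rel k k ∩ Ae Γ i j g k k ∩ Ae Γ j i g.conv k k = {EQ}
    rw [Γ.diag]
    ext b
    constructor
    · rintro ⟨⟨hb, _⟩, _⟩; exact hb
    · intro hb
      rw [Set.mem_singleton_iff] at hb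
      rw [hb]
      exact ⟨⟨rfl, eq_mem_Ae Γ hpc hg k⟩, eq_mem_Ae Γ hpc hg' k⟩
  · -- path consistency
    intro k l m
    constructor
    · exact hne k l
    show Γ.rel k l ∩ Ae Γ i j g k l ∩ Ae Γ j i g.conv k l ⊆
      RCC5Rel.comp (Γ.rel k m ∩ Ae Γ i j g k m ∩ Ae Γ j i g.conv k m)
        (Γ.rel m l ∩ Ae Γ i j g m l ∩ Ae Γ j i g.conv m l)
    rw [comp_eq]
    have e1 : bcomp (Γ.rel k m ∩ Ae Γ i j g k m ∩ Ae Γ j i g.conv k m)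
        (Γ.rel m l ∩ Ae Γ i j g m l ∩ Ae Γ j i g.conv m l) =
        bcomp (Γ.rel k m ∩ Ae Γ i j g k m ∩ Ae Γ j i g.conv k m)
          (Γ.rel m l ∩ Ae Γ i j g m l) ∩
        bcomp (Γ.rel k m ∩ Ae Γ i j g k m ∩ Ae Γ j i g.conv k m) (Ae Γ j i g.conv m l) :=
      ddistl h𝒮 (hUm k m) (hU1m m l) (hBm m l) (hne m l)
    have e2 : bcomp (Γ.rel k m ∩ Ae Γ i j g k m ∩ Ae Γ j i g.conv k m)
        (Γ.rel m l ∩ Ae Γ i j g m l) =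
        bcomp (Γ.rel k m ∩ Ae Γ i j g k m ∩ Ae Γ j i g.conv k m) (Γ.rel m l) ∩
        bcomp (Γ.rel k m ∩ Ae Γ i j g k m ∩ Ae Γ j i g.conv k m) (Ae Γ i j g m l) :=
      ddistl h𝒮 (hUm k m) (hover m l) (hAm m l) (ne_RA Γ hpc hg m l)
    have e3 : ∀ Z : RCC5Rel, Z ∈ 𝒮 →
        bcomp (Γ.rel k m ∩ Ae Γ i j g k m ∩ Ae Γ j i g.conv k m) Z =
        bcomp (Γ.rel k m) Z ∩ bcomp (Ae Γ i j g k m) Z ∩ bcomp (Ae Γ j i g.conv k m) Z := by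
      intro Z hZ
      rw [ddistr h𝒮 hZ (hU1m k m) (hBm k m) (hne k m),
        ddistr h𝒮 hZ (hover k m) (hAm k m) (ne_RA Γ hpc hg k m)]
    rw [e1, e2, e3 _ (hover m l), e3 _ (hAm m l), e3 _ (hBm m l)]
    have hsubR : Γ.rel k l ∩ Ae Γ i j g k l ∩ Ae Γ j i g.conv k l ⊆ Γ.rel k l :=
      Set.inter_subset_left.trans Set.inter_subset_left
    have hsubA : Γ.rel k l ∩ Ae Γ i j g k l ∩ Ae Γ j i g.conv k l ⊆ Ae Γ i j g k l :=
      Set.inter_subset_left.trans Set.inter_subset_right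
    have hsubB : Γ.rel k l ∩ Ae Γ i j g k l ∩ Ae Γ j i g.conv k l ⊆ Ae Γ j i g.conv k l :=
      Set.inter_subset_right
    have sBA : Γ.rel k l ⊆ bcomp (Ae Γ j i g.conv k m) (Ae Γ i j g m l) := by
      have := sub_AB Γ hpc (i := j) (j := i) (g := g.conv) k m l
      rwa [conv_conv] at this
    refine Set.subset_inter (Set.subset_inter ?_ ?_) ?_
    · -- ⊆ (RR ∩ AR ∩ BR)
      refine Set.subset_inter (Set.subset_inter ?_ ?_) ?_
      · exact hsubR.trans (pc_bcomp hpc k m l)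
      · exact hsubA.trans (sub_AR Γ hpc i j g k m l)
      · exact hsubB.trans (sub_AR Γ hpc j i g.conv k m l)
    · -- ⊆ (RA ∩ AA ∩ BA)
      refine Set.subset_inter (Set.subset_inter ?_ ?_) ?_
      · exact hsubA.trans (sub_RA Γ hpc i j g k m l)
      · exact hsubA.trans (sub_AA Γ hpc hg k m l)
      · exact hsubR.trans sBA
    · -- ⊆ (RB ∩ AB ∩ BB)
      refine Set.subset_inter (Set.subset_inter ?_ ?_) ?_
      · exact hsubB.trans (sub_RA Γ hpc j i g.conv k m l)
      · exact hsubR.trans (sub_AB Γ hpc (i := i) (j := j) (g := g) k m l)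
      · exact hsubB.trans (sub_AA Γ hpc hg' k m l)
  · exact fun k l => hUm k l
  · exact fun k l => Set.inter_subset_left.trans Set.inter_subset_left
  · show Γ.rel i j ∩ Ae Γ i j g i j ∩ Ae Γ j i g.conv i j = {g}
    rw [Ae_diag]
    ext b
    constructor
    · rintro ⟨⟨_, hb⟩, _⟩; exact hb
    · intro hb
      rw [Set.mem_singleton_iff] at hb
      rw [hb]
      exact ⟨⟨hg, rfl⟩, g_mem_Bii Γ hg⟩

end RedAux

namespace RedAux
open RCC5Basic

variable {n : ℕ}

/-- Total size of a network's constraints. -/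
noncomputable def msize (Γ : RCC5Network n) : ℕ :=
  ∑ p : Fin n × Fin n, (Γ.rel p.1 p.2).ncard

theorem atomize {𝒮 : Set RCC5Rel} (h𝒮 : IsDistributiveSubalgebra 𝒮) :
    ∀ (N : ℕ) (Γ : RCC5Network n), msize Γ ≤ N → Γ.PathConsistent → Γ.Over 𝒮 →
    ∃ Δ : RCC5Network n, Δ.PathConsistent ∧ Δ.Refines Γ ∧ ∀ k l, ∃ b, Δ.rel k l = {b} := by
  intro N
  induction N with
  | zero =>
    intro Γ hsize hpc hover
    by_cases hall : ∀ k l, ∃ b, Γ.rel k l = {b}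
    · exact ⟨Γ, hpc, fun k l => subset_rfl, hall⟩
    · push_neg at hall
      obtain ⟨k, l, hkl⟩ := hall
      obtain ⟨γ', hγ'⟩ := pc_ne hpc k l
      obtain ⟨Γ', h1, h2, h3, h4⟩ := refineEdge h𝒮 Γ hover hpc k l γ' hγ'
      exfalso
      have hl : msize Γ' < msize Γ := by
        apply Finset.sum_lt_sum
        · intro p _
          exact Set.ncard_le_ncard (h3 p.1 p.2) (Set.toFinite _)
        · refine ⟨(k, l), Finset.mem_univ _, ?_⟩
          apply Set.ncard_lt_ncard
          · rw [h4]
            exact ⟨Set.singleton_subset_iff.mpr hγ', fun hsub =>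
              hkl γ' (Set.Subset.antisymm hsub (Set.singleton_subset_iff.mpr hγ'))⟩
          · exact Set.toFinite _
      omega
  | succ N ih =>
    intro Γ hsize hpc hover
    by_cases hall : ∀ k l, ∃ b, Γ.rel k l = {b}
    · exact ⟨Γ, hpc, fun k l => subset_rfl, hall⟩
    · push_neg at hall
      obtain ⟨k, l, hkl⟩ := hall
      obtain ⟨γ', hγ'⟩ := pc_ne hpc k l
      obtain ⟨Γ', h1, h2, h3, h4⟩ := refineEdge h𝒮 Γ hover hpc k l γ' hγ'
      have hl : msize Γ' < msize Γ := by
        apply Finset.sum_lt_sum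
        · intro p _
          exact Set.ncard_le_ncard (h3 p.1 p.2) (Set.toFinite _)
        · refine ⟨(k, l), Finset.mem_univ _, ?_⟩
          apply Set.ncard_lt_ncard
          · rw [h4]
            exact ⟨Set.singleton_subset_iff.mpr hγ', fun hsub =>
              hkl γ' (Set.Subset.antisymm hsub (Set.singleton_subset_iff.mpr hγ'))⟩
          · exact Set.toFinite _
      obtain ⟨Δ, hd1, hd2, hd3⟩ := ih Γ' (by omega) h1 h2
      exact ⟨Δ, hd1, fun a b => (hd2 a b).trans (h3 a b), hd3⟩

end RedAux

namespace RedAux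
open RCC5Basic

variable {n : ℕ}

theorem L_trans_fact : ∀ a b c : RCC5Basic, (a = PP ∨ a = EQ) → (b = PP ∨ b = EQ) →
    c ∈ ctabL a b → (c = PP ∨ c = EQ) := by decide
theorem L_antisym_fact : ∀ a : RCC5Basic, (a = PP ∨ a = EQ) →
    (a.conv = PP ∨ a.conv = EQ) → a = EQ := by decide
theorem dr_fact1 : ∀ a b c : RCC5Basic, (a = PPi ∨ a = EQ) → b ≠ DR →
    c ∈ ctabL a b → c ≠ DR := by decide
theorem dr_fact2 : ∀ a b c : RCC5Basic, a ≠ DR → (b = PP ∨ b = EQ) →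
    c ∈ ctabL a b → c ≠ DR := by decide
theorem conv_L_fact : ∀ a : RCC5Basic, (a = PP ∨ a = EQ) ↔ (a.conv = PPi ∨ a.conv = EQ) := by
  decide
theorem conv_ne_DR : ∀ a : RCC5Basic, a ≠ DR → a.conv ≠ DR := by decide

theorem realizeScenario (s : Fin n → Fin n → RCC5Basic)
    (hsym : ∀ k l, s l k = (s k l).conv) (hdiag : ∀ k, s k k = EQ)
    (hclose : ∀ k m l, s k l ∈ ctabL (s k m) (s m l)) :
    ∃ a : Fin n → Region, ∀ k l, (s k l).interp (a k) (a l) := by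
  classical
  -- the "part-of" preorder induced by the scenario
  set L : Fin n → Fin n → Prop := fun p k => s p k = PP ∨ s p k = EQ with hL
  have Lrefl : ∀ k, L k k := fun k => Or.inr (hdiag k)
  have Ltrans : ∀ p q r, L p q → L q r → L p r := fun p q r h1 h2 =>
    L_trans_fact _ _ _ h1 h2 (hclose p q r)
  have Lantisym : ∀ p q, L p q → L q p → s p q = EQ := by
    intro p q h1 h2
    refine L_antisym_fact (s p q) h1 ?_
    rw [← hsym]
    exact h2
  have Lconv : ∀ p k, L p k → (s k p = PPi ∨ s k p = EQ) := by
    intro p k h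
    rw [hsym]
    exact (conv_L_fact (s p k)).mp h
  -- tokens
  set code : Fin n × Fin n → ℕ := fun p => ((finProdFinEquiv p : Fin (n * n)) : ℕ) with hcode
  have code_inj : Function.Injective code :=
    fun p q h => finProdFinEquiv.injective (Fin.val_injective h)
  set T : Fin n → Finset ℕ := fun k =>
    (Finset.univ.filter
      (fun p : Fin n × Fin n => p.1 ≤ p.2 ∧ s p.1 p.2 ≠ DR ∧ (L p.1 k ∨ L p.2 k))).image code
    with hT
  have memT : ∀ (x : ℕ) (k : Fin n), x ∈ T k ↔
      ∃ p : Fin n × Fin n, (p.1 ≤ p.2 ∧ s p.1 p.2 ≠ DR ∧ (L p.1 k ∨ L p.2 k)) ∧ code p = x := by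
    intro x k
    rw [hT]
    simp [Finset.mem_image, Finset.mem_filter]
  have Tne : ∀ k, (T k).Nonempty := by
    intro k
    exact ⟨code (k, k), (memT _ k).mpr ⟨(k, k), ⟨le_refl k, by simp [hdiag k],
      Or.inl (Lrefl k)⟩, rfl⟩⟩
  -- subset characterisation
  have TsubOf : ∀ k l, L k l → T k ⊆ T l := by
    intro k l hkl x hx
    obtain ⟨p, ⟨h1, h2, h3⟩, h4⟩ := (memT x k).mp hx
    refine (memT x l).mpr ⟨p, ⟨h1, h2, ?_⟩, h4⟩
    rcases h3 with h | h
    · exact Or.inl (Ltrans _ _ _ h hkl)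
    · exact Or.inr (Ltrans _ _ _ h hkl)
  have TsubTo : ∀ k l, T k ⊆ T l → L k l := by
    intro k l hsub
    have hx : code (k, k) ∈ T l := hsub ((memT _ k).mpr ⟨(k, k),
      ⟨le_refl k, by simp [hdiag k], Or.inl (Lrefl k)⟩, rfl⟩)
    obtain ⟨p, ⟨_, _, h3⟩, h4⟩ := (memT _ l).mp hx
    have hp : p = (k, k) := code_inj h4
    subst hp
    rcases h3 with h | h <;> exact h
  -- overlap characterisations
  have Tinter : ∀ k l, s k l ≠ DR → (T k ∩ T l).Nonempty := by
    intro k l hne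
    by_cases hle : k ≤ l
    · refine ⟨code (k, l), Finset.mem_inter.mpr ⟨?_, ?_⟩⟩
      · exact (memT _ k).mpr ⟨(k, l), ⟨hle, hne, Or.inl (Lrefl k)⟩, rfl⟩
      · exact (memT _ l).mpr ⟨(k, l), ⟨hle, hne, Or.inr (Lrefl l)⟩, rfl⟩
    · have hle' : l ≤ k := le_of_not_ge hle
      have hne' : s l k ≠ DR := by rw [hsym]; exact conv_ne_DR _ hne
      refine ⟨code (l, k), Finset.mem_inter.mpr ⟨?_, ?_⟩⟩
      · exact (memT _ k).mpr ⟨(l, k), ⟨hle', hne', Or.inr (Lrefl k)⟩, rfl⟩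
      · exact (memT _ l).mpr ⟨(l, k), ⟨hle', hne', Or.inl (Lrefl l)⟩, rfl⟩
  have Tdisj : ∀ k l, s k l = DR → ¬(T k ∩ T l).Nonempty := by
    intro k l hDR ⟨x, hx⟩
    obtain ⟨hxk, hxl⟩ := Finset.mem_inter.mp hx
    obtain ⟨p, ⟨hp1, hp2, hp3⟩, hp4⟩ := (memT x k).mp hxk
    obtain ⟨q, ⟨hq1, hq2, hq3⟩, hq4⟩ := (memT x l).mp hxl
    have hpq : p = q := code_inj (hp4.trans hq4.symm)
    subst hpq
    -- in all four cases s k l ≠ DR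
    have : s k l ≠ DR := by
      rcases hp3 with h | h <;> rcases hq3 with h' | h'
      · exact dr_fact1 _ _ _ (Lconv _ _ h) (by
          rcases h' with h'' | h'' <;> rw [h''] <;> decide) (hclose k p.1 l)
      · have step : s k p.2 ≠ DR := dr_fact1 _ _ _ (Lconv _ _ h) hp2 (hclose k p.1 p.2)
        exact dr_fact2 _ _ _ step h' (hclose k p.2 l)
      · have h21 : s p.2 p.1 ≠ DR := by rw [hsym]; exact conv_ne_DR _ hp2
        have step : s k p.1 ≠ DR := dr_fact1 _ _ _ (Lconv _ _ h) h21 (hclose k p.2 p.1)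
        exact dr_fact2 _ _ _ step h' (hclose k p.1 l)
      · exact dr_fact1 _ _ _ (Lconv _ _ h) (by
          rcases h' with h'' | h'' <;> rw [h''] <;> decide) (hclose k p.2 l)
    exact this hDR
  have Teq : ∀ k l, T k = T l → s k l = EQ := by
    intro k l h
    exact Lantisym _ _ (TsubTo _ _ h.le) (TsubTo _ _ h.ge)
  -- the regions
  refine ⟨fun k => reg (T k) (Tne k), ?_⟩
  intro k l
  rcases hval : s k l with _ | _ | _ | _ | _
  · -- DR
    intro hO
    exact Tdisj k l hval ((reg_O_iff _ _).mp hO)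
  · -- PO
    refine ⟨(reg_O_iff _ _).mpr (Tinter k l (by rw [hval]; decide)), ?_, ?_⟩
    · intro hsub
      have : L k l := TsubTo _ _ ((reg_sub_iff _ _).mp hsub)
      rcases this with h | h <;> rw [hval] at h <;> exact absurd h (by decide)
    · intro hsub
      have : L l k := TsubTo _ _ ((reg_sub_iff _ _).mp hsub)
      rcases this with h | h <;> rw [hsym, hval] at h <;> exact absurd h (by decide)
  · -- PP
    refine ⟨(reg_sub_iff _ _).mpr (TsubOf k l (Or.inl hval)), ?_⟩
    intro heq
    have hTeq : T k = T l := (reg_eq_iff _ _).mp heq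
    rw [Teq k l hTeq] at hval
    exact absurd hval (by decide)
  · -- PPi
    have hlk : s l k = PP := by
      rw [hsym, hval]; decide
    refine ⟨(reg_sub_iff _ _).mpr (TsubOf l k (Or.inl hlk)), ?_⟩
    intro heq
    have hTeq : T k = T l := (reg_eq_iff _ _).mp heq
    rw [Teq k l hTeq] at hval
    exact absurd hval (by decide)
  · -- EQ
    have hTeq : T k = T l := by
      apply Finset.Subset.antisymm
      · exact TsubOf k l (Or.inr hval)
      · exact TsubOf l k (Or.inr (by rw [hsym, hval]; decide))
    exact Subtype.ext (congrArg regSet hTeq)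

end RedAux

namespace RedAux
open RCC5Basic

variable {n : ℕ}

theorem biInter_mem {𝒮 : Set RCC5Rel} (h𝒮 : IsDistributiveSubalgebra 𝒮)
    (f : Fin n → RCC5Rel) (hf : ∀ k, f k ∈ 𝒮) (P : Fin n → Prop) (b0 : RCC5Basic)
    (hb0 : ∀ k, P k → b0 ∈ f k) : (⋂ k ∈ {k | P k}, f k) ∈ 𝒮 := by
  classical
  have hset : {k | P k} = ↑(Finset.univ.filter P) := by ext x; simp
  rw [hset]
  have key : ∀ F : Finset (Fin n), (∀ k ∈ F, b0 ∈ f k) →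
      (⋂ k ∈ (F : Set (Fin n)), f k) ∈ 𝒮 := by
    intro F
    induction F using Finset.induction_on with
    | empty => intro _; simpa using univ_mem h𝒮
    | @insert a F ha ih =>
      intro hb
      rw [Finset.coe_insert, Set.biInter_insert]
      refine inter_mem h𝒮 (hf a) (ih fun k hk => hb k (Finset.mem_insert_of_mem hk)) ?_
      exact ⟨b0, hb a (Finset.mem_insert_self a F),
        Set.mem_iInter₂.mpr fun k hk => hb k (Finset.mem_insert_of_mem hk)⟩
  exact key _ (fun k hk => hb0 k (by simpa using hk))

end RedAux


/-- A path from `i` to `j` in a network on `n` variables: a nonempty list `l` of successive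
vertices (so the path is `i :: l`), with consecutive vertices distinct, ending at `j`. -/
def IsPathFrom {n : ℕ} (i j : Fin n) (l : List (Fin n)) : Prop :=
  l ≠ [] ∧ l.getLast? = some j ∧ List.Chain (· ≠ ·) i l

/-- The path `u :: l` never traverses the edge `{i, j}` (in either direction). -/
def AvoidsEdge {n : ℕ} (i j : Fin n) (u : Fin n) (l : List (Fin n)) : Prop :=
  List.Chain (fun a b => ¬(a = i ∧ b = j) ∧ ¬(a = j ∧ b = i)) u l

/-- In an all-different path-consistent RCC5 network over a distributive subalgebra, a
constraint `(v_i R_ij v_j)` (`i ≠ j`) is redundant iff `R_ij` equals the intersection of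
the weak compositions of all paths of length 2 from `v_i` to `v_j`. -/
theorem redundant_iff_length_two_paths {n : ℕ} (𝒮 : Set RCC5Rel)
    (h𝒮 : IsDistributiveSubalgebra 𝒮) (Γ : RCC5Network n) (hover : Γ.Over 𝒮)
    (had : Γ.AllDifferent) (hpc : Γ.PathConsistent) (i j : Fin n) (hij : i ≠ j) :
    Γ.Redundant i j ↔
      Γ.rel i j =
        ⋂ k ∈ {k : Fin n | k ≠ i ∧ k ≠ j}, RCC5Rel.comp (Γ.rel i k) (Γ.rel k j) := by
  open RedAux RCC5Basic in
  constructor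
  · -- redundancy implies the path-intersection characterisation
    intro hred
    apply Set.Subset.antisymm
    · exact Set.subset_iInter₂ fun k _ => (hpc i j k).2
    · intro γ hγI
      set I : RCC5Rel :=
        ⋂ k ∈ {k : Fin n | k ≠ i ∧ k ≠ j}, RCC5Rel.comp (Γ.rel i k) (Γ.rel k j) with hIdef
      have hRsubI : Γ.rel i j ⊆ I := Set.subset_iInter₂ fun k _ => (hpc i j k).2
      obtain ⟨b0, hb0⟩ := pc_ne hpc i j
      have hImem : I ∈ 𝒮 :=
        biInter_mem h𝒮 (fun k => RCC5Rel.comp (Γ.rel i k) (Γ.rel k j))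
          (fun k => h𝒮.2.2.1 _ (hover i k) _ (hover k j)) (fun k => k ≠ i ∧ k ≠ j) b0
          (fun k _ => (hpc i j k).2 hb0)
      have hIsubcomp : ∀ k, k ≠ i → k ≠ j → I ⊆ RCC5Rel.comp (Γ.rel i k) (Γ.rel k j) :=
        fun k h1 h2 =>
          Set.biInter_subset_of_mem (show k ∈ {k : Fin n | k ≠ i ∧ k ≠ j} from ⟨h1, h2⟩)
      set relp : Fin n → Fin n → RCC5Rel := fun a b =>
        if a = i ∧ b = j then I else if a = j ∧ b = i then RCC5Rel.conv I else Γ.rel a b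
        with hrelp
      have hpij : relp i j = I := if_pos ⟨rfl, rfl⟩
      have hpji : relp j i = RCC5Rel.conv I := by
        show (if j = i ∧ i = j then I else if j = j ∧ i = i then RCC5Rel.conv I
          else Γ.rel j i) = RCC5Rel.conv I
        rw [if_neg (fun h => hij h.1.symm), if_pos ⟨rfl, rfl⟩]
      have hpoth : ∀ a b, ¬(a = i ∧ b = j) → ¬(a = j ∧ b = i) → relp a b = Γ.rel a b := by
        intro a b h1 h2
        show (if a = i ∧ b = j then I else if a = j ∧ b = i then RCC5Rel.conv I
          else Γ.rel a b) = Γ.rel a b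
        rw [if_neg h1, if_neg h2]
      have hsup : ∀ a b, Γ.rel a b ⊆ relp a b := by
        intro a b
        by_cases h1 : a = i ∧ b = j
        · rw [h1.1, h1.2, hpij]; exact hRsubI
        by_cases h2 : a = j ∧ b = i
        · rw [h2.1, h2.2, hpji, Γ.conv_rel i j]
          exact conv_mono hRsubI
        · rw [hpoth a b h1 h2]
      have hconv : ∀ a b, relp b a = RCC5Rel.conv (relp a b) := by
        intro a b
        by_cases h1 : a = i ∧ b = j
        · rw [h1.1, h1.2, hpji, hpij]
        by_cases h2 : a = j ∧ b = i
        · rw [h2.1, h2.2, hpij, hpji, conv_conv_rel]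
        · have h1' : ¬(b = i ∧ a = j) := fun h => h2 ⟨h.2, h.1⟩
          have h2' : ¬(b = j ∧ a = i) := fun h => h1 ⟨h.2, h.1⟩
          rw [hpoth a b h1 h2, hpoth b a h1' h2']
          exact Γ.conv_rel a b
      have hdiagp : ∀ a, relp a a = {RCC5Basic.EQ} := by
        intro a
        have h1 : ¬(a = i ∧ a = j) := fun h => hij (h.1.symm.trans h.2)
        have h2 : ¬(a = j ∧ a = i) := fun h => hij (h.2.symm.trans h.1)
        rw [hpoth a a h1 h2]
        exact Γ.diag a
      set Γp : RCC5Network n := ⟨relp, hconv, hdiagp⟩ with hΓp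
      have hprel : ∀ a b, Γp.rel a b = relp a b := fun a b => rfl
      have hpover : Γp.Over 𝒮 := by
        intro a b
        rw [hprel]
        by_cases h1 : a = i ∧ b = j
        · rw [h1.1, h1.2, hpij]; exact hImem
        by_cases h2 : a = j ∧ b = i
        · rw [h2.1, h2.2, hpji]; exact conv_mem h𝒮 hImem
        · rw [hpoth a b h1 h2]; exact hover a b
      have hkey : ∀ m, I ⊆ bcomp (relp i m) (relp m j) := by
        intro m
        by_cases hmi : m = i
        · rw [hmi, hdiagp i, hpij, bcomp_id_left]
        by_cases hmj : m = j
        · rw [hmj, hdiagp j, hpij, bcomp_id_right]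
        · have e1 : relp i m = Γ.rel i m := hpoth i m (fun h => hmj h.2) (fun h => hij h.1)
          have e2 : relp m j = Γ.rel m j := hpoth m j (fun h => hmi h.1) (fun h => hmj h.1)
          rw [e1, e2, ← comp_eq]
          exact hIsubcomp m hmi hmj
      have hppc : Γp.PathConsistent := by
        intro a b m
        constructor
        · obtain ⟨c, hc⟩ := pc_ne hpc a b
          exact ⟨c, hsup a b hc⟩
        · show relp a b ⊆ RCC5Rel.comp (relp a m) (relp m b)
          rw [comp_eq]
          by_cases h1 : a = i ∧ b = j
          · rw [h1.1, h1.2, hpij]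
            exact hkey m
          by_cases h2 : a = j ∧ b = i
          · rw [h2.1, h2.2, hpji]
            calc RCC5Rel.conv I ⊆ RCC5Rel.conv (bcomp (relp i m) (relp m j)) :=
                  conv_mono (hkey m)
              _ = bcomp (RCC5Rel.conv (relp m j)) (RCC5Rel.conv (relp i m)) := conv_bcomp _ _
              _ = bcomp (relp j m) (relp m i) := by rw [← hconv m j, ← hconv i m]
          · rw [hpoth a b h1 h2]
            exact (pc_bcomp hpc a m b).trans (bcomp_mono (hsup a m) (hsup m b))
      have hγp : γ ∈ Γp.rel i j := by rw [hprel, hpij]; exact hγI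
      obtain ⟨Γ1, h1pc, h1over, h1ref, h1ij⟩ := refineEdge h𝒮 Γp hpover hppc i j γ hγp
      obtain ⟨Δ, hΔpc, hΔref, hΔsing⟩ := atomize h𝒮 (msize Γ1) Γ1 le_rfl h1pc h1over
      have hs : ∀ k l, Δ.rel k l = {(hΔsing k l).choose} := fun k l => (hΔsing k l).choose_spec
      set sc : Fin n → Fin n → RCC5Basic := fun k l => (hΔsing k l).choose with hscdef
      have hsmem : ∀ k l, sc k l ∈ Δ.rel k l := by
        intro k l
        rw [hs k l]
        rfl
      have hsymS : ∀ k l, sc l k = (sc k l).conv := by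
        intro k l
        have h := Δ.conv_rel k l
        rw [hs k l, hs l k, conv_singleton] at h
        exact Set.singleton_eq_singleton_iff.mp h
      have hdiagS : ∀ k, sc k k = RCC5Basic.EQ := by
        intro k
        have h := Δ.diag k
        rw [hs k k] at h
        exact Set.singleton_eq_singleton_iff.mp h
      have hcloseS : ∀ k m l, sc k l ∈ ctabL (sc k m) (sc m l) := by
        intro k m l
        have h := pc_bcomp hΔpc k m l (hsmem k l)
        rw [hs k m, hs m l] at h
        obtain ⟨r, hr, t, ht, hmem2⟩ := h
        rw [Set.mem_singleton_iff] at hr ht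
        subst hr; subst ht
        exact hmem2
      have hsij : sc i j = γ := by
        have h : sc i j ∈ Γ1.rel i j := hΔref i j (hsmem i j)
        rw [h1ij] at h
        exact Set.mem_singleton_iff.mp h
      obtain ⟨a, ha⟩ := realizeScenario sc hsymS hdiagS hcloseS
      have hsol : (Γ.removeEdge i j).IsSolution a := by
        intro k l
        by_cases hc : i ≠ j ∧ ((k = i ∧ l = j) ∨ (k = j ∧ l = i))
        · rw [show (Γ.removeEdge i j).rel k l = Set.univ from if_pos hc]
          exact ⟨sc k l, trivial, ha k l⟩
        · rw [show (Γ.removeEdge i j).rel k l = Γ.rel k l from if_neg hc]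
          push_neg at hc
          have h' := hc hij
          have h1' : ¬(k = i ∧ l = j) := fun h => h'.1 h.1 h.2
          have h2' : ¬(k = j ∧ l = i) := fun h => h'.2 h.1 h.2
          have hmem : sc k l ∈ Γp.rel k l := h1ref k l (hΔref k l (hsmem k l))
          rw [hprel, hpoth k l h1' h2'] at hmem
          exact ⟨sc k l, hmem, ha k l⟩
      obtain ⟨b, hbR, hbint⟩ := hred a hsol
      have hbγ : b = γ := interp_unique hbint (by rw [← hsij]; exact ha i j)
      rwa [hbγ] at hbR
  · -- the path-intersection characterisation implies redundancy
    intro heq a ha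
    obtain ⟨γ0, hγ0⟩ := interp_total (a i) (a j)
    refine ⟨γ0, ?_, hγ0⟩
    rw [heq]
    refine Set.mem_iInter₂.mpr fun k hk => ?_
    refine ⟨a i, a j, hγ0, a k, ?_, ?_⟩
    · have h := ha i k
      have hcond : ¬(i ≠ j ∧ ((i = i ∧ k = j) ∨ (i = j ∧ k = i))) := by
        rintro ⟨hne, (⟨-, hkj⟩ | ⟨hij', -⟩)⟩
        · exact hk.2 hkj
        · exact hne hij'
      rwa [show (Γ.removeEdge i j).rel i k = Γ.rel i k from if_neg hcond] at h
    · have h := ha k j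
      have hcond : ¬(i ≠ j ∧ ((k = i ∧ j = j) ∨ (k = j ∧ j = i))) := by
        rintro ⟨hne, (⟨hki, -⟩ | ⟨-, hji⟩)⟩
        · exact hk.1 hki
        · exact hne hji.symm
      rwa [show (Γ.removeEdge i j).rel k j = Γ.rel k j from if_neg hcond] at h
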